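/- arXiv:2209.08481 — 3 statements merged into one kernel-verified Lean document; each statement's English description precedes it below -/
import Mathlib

section
/- There exists an entire function g which belongs to the Hörmander–Fock space H but not to the Fock space F(ℂ); hence the inclusion F(ℂ) ⊆ H is strict. -/
/-! Take g(z) = exp(z²/2). Then |g(z)|² e^{-|z|²} = exp(-2 (Im z)²) does not depend on Re z,
so it is not integrable over ℂ; but it is bounded by 1, and the extra weight (1 + |z|²)⁻² is
integrable over the plane. -/

open MeasureTheory Filter Module

lemma Complex.norm_exp_sq_div_two_sq_mul_exp_neg_norm_sq (z : ℂ) :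
    ‖Complex.exp (z ^ 2 / 2)‖ ^ 2 * Real.exp (-‖z‖ ^ 2) = Real.exp (-2 * z.im ^ 2) := by
  have hre : (z ^ 2 / 2).re = (z.re ^ 2 - z.im ^ 2) / 2 := by
    simp [sq, Complex.div_ofNat_re]
  rw [Complex.norm_exp, ← Real.exp_nat_mul, ← Real.exp_add, hre, Complex.sq_norm,
    Complex.normSq_apply]
  ring_nf

lemma integrable_inv_one_add_norm_sq_sq {E : Type*} [NormedAddCommGroup E] [NormedSpace ℝ E]
    [FiniteDimensional ℝ E] [MeasurableSpace E] [BorelSpace E] {μ : Measure E}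
    [μ.IsAddHaarMeasure] (hE : finrank ℝ E < 4) :
    Integrable (fun x : E => ((1 + ‖x‖ ^ 2) ^ 2)⁻¹) μ := by
  have h := integrable_rpow_neg_one_add_norm_sq (μ := μ) (r := 4) (by exact_mod_cast hE)
  refine h.congr (ae_of_all _ fun x => ?_)
  dsimp only
  rw [show (-4 / 2 : ℝ) = -(2 : ℕ) by norm_num, Real.rpow_neg (by positivity), Real.rpow_natCast]

lemma not_integrable_comp_im {E : Type*} [NormedAddCommGroup E] {φ : ℝ → E}
    (hφ : ∃ᵐ y, φ y ≠ 0) : ¬ Integrable (fun z : ℂ => φ z.im) := by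
  intro h
  have hprod : Integrable (fun p : ℝ × ℝ => φ p.2) (volume.prod volume) :=
    (Complex.volume_preserving_equiv_real_prod.integrable_comp_emb
      Complex.measurableEquivRealProd.measurableEmbedding).1 h
  obtain ⟨y, hy, hconst⟩ := (hφ.and_eventually hprod.prod_left_ae).exists
  have : IsFiniteMeasure (volume : Measure ℝ) := (integrable_const_iff_isFiniteMeasure hy).1 hconst
  simpa using measure_ne_top (volume : Measure ℝ) Set.univ

theorem stmt_4 :
    ∃ g : ℂ → ℂ, Differentiable ℂ g ∧
      Integrable (fun z : ℂ => ‖g z‖ ^ 2 / (1 + ‖z‖ ^ 2) ^ 2 * Real.exp (-‖z‖ ^ 2)) ∧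
      ¬ Integrable (fun z : ℂ => ‖g z‖ ^ 2 * Real.exp (-‖z‖ ^ 2)) := by
  refine ⟨fun z => Complex.exp (z ^ 2 / 2), by fun_prop, ?_, ?_⟩
  · refine (integrable_inv_one_add_norm_sq_sq (by simp)).mono (by fun_prop)
      (ae_of_all _ fun z => ?_)
    rw [div_mul_eq_mul_div, Complex.norm_exp_sq_div_two_sq_mul_exp_neg_norm_sq, div_eq_mul_inv]
    have hexp_le_one : Real.exp (-2 * z.im ^ 2) ≤ 1 :=
      Real.exp_le_one_iff.2 (by nlinarith [sq_nonneg z.im])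
    simp only [norm_mul, Real.norm_eq_abs, abs_of_pos (Real.exp_pos _), abs_inv]
    exact mul_le_of_le_one_left (by positivity) hexp_le_one
  · simp_rw [Complex.norm_exp_sq_div_two_sq_mul_exp_neg_norm_sq]
    exact not_integrable_comp_im (φ := fun y => Real.exp (-2 * y ^ 2))
      (.of_forall fun _ => (Real.exp_pos _).ne')
end

section
/- Let Ω ⊆ ℂ be open, let p : Ω → ℝ be a nonnegative measurable weight (e.g. subharmonic), let n ≥ 1, and let f : Ω → ℂ be polyanalytic of order n on Ω such that ∫_Ω |∂̄^k f(z)|² e^{-p(z)} dλ(z) < ∞ for every k = 0, 1, ..., n−1. Then the function u(z) := −Σ_{k=1}^{n} ((−1)^k / k!) z̄^k ∂̄^{k−1}f(z) solves ∂̄u = f on Ω, and it satisfies the estimate ∫_Ω |u(z)|²/(1+|z|²)^{2n} e^{-p(z)} dλ(z) ≤ n Σ_{k=1}^{n} ∫_Ω |∂̄^{k−1} f(z)|² e^{-p(z)} dλ(z). -/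
/-!
With `a j = (-1)^j / j! * z̄^j * ∂̄^j f`, the Leibniz rule and `∂̄ z̄^k = k z̄^(k-1)` give
`∂̄` of the `k`-th summand of `u` as `a (k-1) - a k`, so `∂̄ u = a 0 - a n = f`, the last term
vanishing by polyanalyticity. The estimate is pointwise: Cauchy–Schwarz over the `n` summands and
`|z|^(2k) ≤ (1 + |z|²)^(2n)`.
-/

open MeasureTheory

/-- The Wirtinger (Cauchy–Riemann) operator `∂̄u(z) = (1/2)(∂u/∂x + i ∂u/∂y)`. -/
noncomputable def dbar (u : ℂ → ℂ) (z : ℂ) : ℂ :=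
  (1 / 2) * (fderiv ℝ u z 1 + Complex.I * fderiv ℝ u z Complex.I)

open Finset Complex
open scoped ComplexConjugate

section Wirtinger

variable {u v : ℂ → ℂ} {z : ℂ}

theorem dbar_eq_of_hasFDerivAt {L : ℂ →L[ℝ] ℂ} (h : HasFDerivAt u L z) :
    dbar u z = (1 / 2) * (L 1 + I * L I) := by
  rw [dbar, h.fderiv]

theorem dbar_neg : dbar (fun w => -u w) z = -dbar u z := by
  simp only [dbar, fderiv_fun_neg, neg_apply]
  ring

theorem dbar_sum {ι : Type*} (s : Finset ι) {F : ι → ℂ → ℂ}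
    (h : ∀ i ∈ s, DifferentiableAt ℝ (F i) z) :
    dbar (fun w => ∑ i ∈ s, F i w) z = ∑ i ∈ s, dbar (F i) z := by
  simp only [dbar, fderiv_fun_sum h, FunLike.coe_sum, Finset.sum_apply, mul_sum, sum_add_distrib,
    mul_add]

theorem dbar_mul (hu : DifferentiableAt ℝ u z) (hv : DifferentiableAt ℝ v z) :
    dbar (fun w => u w * v w) z = dbar u z * v z + u z * dbar v z := by
  simp only [dbar, fderiv_fun_mul hu hv, add_apply, smul_apply, smul_eq_mul]
  ring

theorem dbar_const_mul (c : ℂ) (hu : DifferentiableAt ℝ u z) :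
    dbar (fun w => c * u w) z = c * dbar u z := by
  simp only [dbar, fderiv_const_mul hu c, smul_apply, smul_eq_mul]
  ring

end Wirtinger

theorem hasFDerivAt_conj_pow (k : ℕ) (z : ℂ) :
    HasFDerivAt (fun w => conj w ^ k)
      (((ContinuousLinearMap.toSpanSingleton ℂ ((k : ℂ) * conj z ^ (k - 1))).restrictScalars
        ℝ).comp (conjCLE : ℂ →L[ℝ] ℂ)) z :=
  ((hasDerivAt_pow k (conj z)).hasFDerivAt.restrictScalars ℝ).comp z conjCLE.hasFDerivAt

theorem dbar_conj_pow (k : ℕ) (z : ℂ) :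
    dbar (fun w => conj w ^ k) z = k * conj z ^ (k - 1) := by
  rw [dbar_eq_of_hasFDerivAt (hasFDerivAt_conj_pow k z)]
  simp only [one_div, ContinuousLinearMap.comp_apply, ContinuousLinearEquiv.coe_coe,
    ContinuousAlgEquiv.coeCLE_apply, conjCAE_apply, map_one,
    ContinuousLinearMap.coe_restrictScalars', ContinuousLinearMap.toSpanSingleton_apply,
    smul_eq_mul, one_mul, conj_I, neg_mul, mul_neg]
  linear_combination (-(k * conj z ^ (k - 1)) / 2) * I_sq

theorem dbar_neg_one_pow_div_factorial_mul_conj_pow_mul {u : ℂ → ℂ} {z : ℂ} {k : ℕ}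
    (hk : 1 ≤ k) (hu : DifferentiableAt ℝ u z) :
    dbar (fun w => (-1) ^ k / (k.factorial : ℂ) * conj w ^ k * u w) z =
      (-1) ^ k / (k.factorial : ℂ) * conj z ^ k * dbar u z -
        (-1) ^ (k - 1) / ((k - 1).factorial : ℂ) * conj z ^ (k - 1) * u z := by
  obtain ⟨j, rfl⟩ : ∃ j, k = j + 1 := ⟨k - 1, by omega⟩
  have hpow := (hasFDerivAt_conj_pow (j + 1) z).differentiableAt
  rw [dbar_mul (hpow.const_mul _) hu, dbar_const_mul _ hpow, dbar_conj_pow,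
    Nat.add_sub_cancel, Nat.factorial_succ]
  have : (j.factorial : ℂ) ≠ 0 := Nat.cast_ne_zero.2 j.factorial_ne_zero
  push_cast
  field_simp
  ring

theorem contDiffOn_dbar {u : ℂ → ℂ} {Ω : Set ℂ} {m : WithTop ℕ∞}
    (hu : ContDiffOn ℝ (m + 1) u Ω) (hΩ : IsOpen Ω) : ContDiffOn ℝ m (dbar u) Ω := by
  have h := hu.fderiv_of_isOpen hΩ le_rfl
  unfold dbar
  fun_prop

theorem contDiffOn_dbar_iterate {Ω : Set ℂ} {m : WithTop ℕ∞} (hΩ : IsOpen Ω) (j : ℕ) :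
    ∀ {u : ℂ → ℂ}, ContDiffOn ℝ (m + j) u Ω → ContDiffOn ℝ m (dbar^[j] u) Ω := by
  induction j with
  | zero => simp
  | succ j ih =>
    intro u hu
    rw [Function.iterate_succ_apply]
    refine ih (contDiffOn_dbar ?_ hΩ)
    rwa [Nat.cast_succ, ← add_assoc] at hu

theorem differentiableAt_dbar_iterate {f : ℂ → ℂ} {Ω : Set ℂ} {n j : ℕ} {z : ℂ}
    (hΩ : IsOpen Ω) (hf : ContDiffOn ℝ n f Ω) (hj : j < n) (hz : z ∈ Ω) :
    DifferentiableAt ℝ (dbar^[j] f) z := by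
  have : ContDiffOn ℝ 1 (dbar^[j] f) Ω :=
    contDiffOn_dbar_iterate hΩ j (hf.of_le (by norm_cast; omega))
  exact (this.differentiableOn one_ne_zero).differentiableAt (hΩ.mem_nhds hz)

theorem Finset.sum_Icc_one_sub_pred {M : Type*} [AddCommGroup M] (a : ℕ → M) (n : ℕ) :
    ∑ k ∈ Icc 1 n, (a k - a (k - 1)) = a n - a 0 := by
  induction n with
  | zero => simp
  | succ n ih =>
    rw [sum_Icc_succ_top (by omega), ih, Nat.add_sub_cancel]
    abel

noncomputable def dbarSolution (n : ℕ) (f : ℂ → ℂ) (z : ℂ) : ℂ :=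
  -∑ k ∈ Icc 1 n, (-1) ^ k / (k.factorial : ℂ) * conj z ^ k * dbar^[k - 1] f z

theorem dbar_dbarSolution {f : ℂ → ℂ} {Ω : Set ℂ} {n : ℕ} {z : ℂ} (hΩ : IsOpen Ω)
    (hf : ContDiffOn ℝ n f Ω) (hpoly : dbar^[n] f z = 0) (hz : z ∈ Ω) :
    dbar (dbarSolution n f) z = f z := by
  have hdiff : ∀ k ∈ Icc 1 n, DifferentiableAt ℝ (dbar^[k - 1] f) z := fun k hk =>
    differentiableAt_dbar_iterate hΩ hf (by grind) hz
  set a : ℕ → ℂ := fun j => (-1) ^ j / (j.factorial : ℂ) * conj z ^ j * dbar^[j] f z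
  have hterm : ∀ k ∈ Icc 1 n,
      dbar (fun w => (-1) ^ k / (k.factorial : ℂ) * conj w ^ k * dbar^[k - 1] f w) z =
        a k - a (k - 1) := by
    intro k hk
    have hk1 : 1 ≤ k := (mem_Icc.1 hk).1
    rw [dbar_neg_one_pow_div_factorial_mul_conj_pow_mul hk1 (hdiff k hk),
      ← Function.iterate_succ_apply' dbar, Nat.succ_eq_add_one, Nat.sub_add_cancel hk1]
  have hsummand : ∀ k ∈ Icc 1 n,
      DifferentiableAt ℝ
        (fun w => (-1) ^ k / (k.factorial : ℂ) * conj w ^ k * dbar^[k - 1] f w) z :=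
    fun k hk => ((hasFDerivAt_conj_pow k z).differentiableAt.const_mul _).mul (hdiff k hk)
  unfold dbarSolution
  rw [dbar_neg, dbar_sum _ hsummand, sum_congr rfl hterm, sum_Icc_one_sub_pred]
  simp [a, hpoly]

theorem norm_sum_sq_le_card_mul {ι E : Type*} [SeminormedAddCommGroup E] (s : Finset ι)
    (v : ι → E) : ‖∑ i ∈ s, v i‖ ^ 2 ≤ #s * ∑ i ∈ s, ‖v i‖ ^ 2 :=
  (pow_le_pow_left₀ (norm_nonneg _) (norm_sum_le _ _) 2).trans sq_sum_le_card_mul_sum_sq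

theorem norm_neg_one_pow_div_factorial_mul_conj_pow_mul_le (k : ℕ) (z w : ℂ) :
    ‖(-1) ^ k / (k.factorial : ℂ) * conj z ^ k * w‖ ≤ ‖z‖ ^ k * ‖w‖ := by
  have hfac : (1 : ℝ) ≤ k.factorial := mod_cast k.factorial_pos
  rw [norm_mul, norm_mul, norm_div, norm_pow, norm_pow, norm_neg, norm_one, one_pow,
    Complex.norm_natCast, RCLike.norm_conj, one_div_mul_eq_div, div_mul_eq_mul_div]
  exact div_le_self (by positivity) hfac

theorem sq_pow_le_one_add_sq_pow (x : ℝ) {k m : ℕ} (hkm : k ≤ m) :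
    (x ^ k) ^ 2 ≤ (1 + x ^ 2) ^ m :=
  calc (x ^ k) ^ 2 = (x ^ 2) ^ k := by ring
    _ ≤ (1 + x ^ 2) ^ k := by gcongr; linarith
    _ ≤ (1 + x ^ 2) ^ m := pow_le_pow_right₀ (by linarith [sq_nonneg x]) hkm

theorem norm_dbarSolution_sq_div_le (n : ℕ) (f : ℂ → ℂ) (z : ℂ) :
    ‖dbarSolution n f z‖ ^ 2 / (1 + ‖z‖ ^ 2) ^ (2 * n) ≤
      n * ∑ k ∈ Icc 1 n, ‖dbar^[k - 1] f z‖ ^ 2 := by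
  set D : ℝ := (1 + ‖z‖ ^ 2) ^ (2 * n)
  have hD : 0 < D := by positivity
  have hterm : ∀ k ∈ Icc 1 n,
      ‖(-1) ^ k / (k.factorial : ℂ) * conj z ^ k * dbar^[k - 1] f z‖ ^ 2 ≤
        D * ‖dbar^[k - 1] f z‖ ^ 2 := fun k hk =>
    calc _ ≤ (‖z‖ ^ k * ‖dbar^[k - 1] f z‖) ^ 2 := by
          gcongr; exact norm_neg_one_pow_div_factorial_mul_conj_pow_mul_le _ _ _
      _ = (‖z‖ ^ k) ^ 2 * ‖dbar^[k - 1] f z‖ ^ 2 := by ring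
      _ ≤ D * ‖dbar^[k - 1] f z‖ ^ 2 := by
          gcongr; exact sq_pow_le_one_add_sq_pow _ (by grind)
  rw [div_le_iff₀ hD]
  calc ‖dbarSolution n f z‖ ^ 2
      ≤ n * ∑ k ∈ Icc 1 n,
          ‖(-1) ^ k / (k.factorial : ℂ) * conj z ^ k * dbar^[k - 1] f z‖ ^ 2 := by
        simpa [dbarSolution] using norm_sum_sq_le_card_mul (Icc 1 n)
          fun k => (-1) ^ k / (k.factorial : ℂ) * conj z ^ k * dbar^[k - 1] f z
    _ ≤ n * ∑ k ∈ Icc 1 n, D * ‖dbar^[k - 1] f z‖ ^ 2 := by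
        gcongr with k hk; exact hterm k hk
    _ = n * (∑ k ∈ Icc 1 n, ‖dbar^[k - 1] f z‖ ^ 2) * D := by rw [← mul_sum]; ring

theorem integral_norm_dbarSolution_sq_div_le {n : ℕ} {f : ℂ → ℂ} {μ : Measure ℂ}
    {ρ : ℂ → ℝ} (hρ : ∀ z, 0 ≤ ρ z)
    (hint : ∀ k < n, Integrable (fun z => ‖dbar^[k] f z‖ ^ 2 * ρ z) μ) :
    ∫ z, ‖dbarSolution n f z‖ ^ 2 / (1 + ‖z‖ ^ 2) ^ (2 * n) * ρ z ∂μ ≤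
      n * ∑ k ∈ Icc 1 n, ∫ z, ‖dbar^[k - 1] f z‖ ^ 2 * ρ z ∂μ := by
  have hint' : ∀ k ∈ Icc 1 n, Integrable (fun z => ‖dbar^[k - 1] f z‖ ^ 2 * ρ z) μ :=
    fun k hk => hint (k - 1) (by grind)
  rw [← integral_finsetSum _ hint', ← integral_const_mul]
  refine integral_mono_of_nonneg (.of_forall fun z => by have := hρ z; positivity)
    ((integrable_finsetSum _ hint').const_mul _) (.of_forall fun z => ?_)
  dsimp only
  calc _ ≤ (n * ∑ k ∈ Icc 1 n, ‖dbar^[k - 1] f z‖ ^ 2) * ρ z := by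
        gcongr; exacts [hρ z, norm_dbarSolution_sq_div_le n f z]
    _ = _ := by rw [mul_assoc, sum_mul]

theorem stmt_8_general (Ω : Set ℂ) (hΩ : IsOpen Ω) (p : ℂ → ℝ) (n : ℕ) (f : ℂ → ℂ)
    (hreg : ContDiffOn ℝ n f Ω) (hpoly : ∀ z ∈ Ω, dbar^[n] f z = 0)
    (hint : ∀ k < n, IntegrableOn (fun z => ‖dbar^[k] f z‖ ^ 2 * Real.exp (-(p z))) Ω) :
    (∀ z ∈ Ω,
      dbar (fun w => -∑ k ∈ Finset.Icc 1 n,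
        ((-1) ^ k / (k.factorial : ℂ)) * (starRingEnd ℂ) w ^ k * dbar^[k - 1] f w) z = f z) ∧
    (∫ z in Ω,
        ‖-∑ k ∈ Finset.Icc 1 n,
            ((-1) ^ k / (k.factorial : ℂ)) * (starRingEnd ℂ) z ^ k * dbar^[k - 1] f z‖ ^ 2 /
          (1 + ‖z‖ ^ 2) ^ (2 * n) * Real.exp (-(p z))) ≤
      n * ∑ k ∈ Finset.Icc 1 n, ∫ z in Ω, ‖dbar^[k - 1] f z‖ ^ 2 * Real.exp (-(p z)) :=
  ⟨fun z hz => dbar_dbarSolution hΩ hreg (hpoly z hz) hz,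
    integral_norm_dbarSolution_sq_div_le (fun _ => (Real.exp_pos _).le) hint⟩

theorem stmt_8 (Ω : Set ℂ) (hΩ : IsOpen Ω) (p : ℂ → ℝ) (hpm : Measurable p)
    (hp0 : ∀ z ∈ Ω, 0 ≤ p z) (n : ℕ) (hn : 1 ≤ n) (f : ℂ → ℂ)
    (hreg : ContDiffOn ℝ n f Ω) (hpoly : ∀ z ∈ Ω, dbar^[n] f z = 0)
    (hint : ∀ k < n, IntegrableOn (fun z => ‖dbar^[k] f z‖ ^ 2 * Real.exp (-(p z))) Ω) :
    (∀ z ∈ Ω,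
      dbar (fun w => -∑ k ∈ Finset.Icc 1 n,
        ((-1) ^ k / (k.factorial : ℂ)) * (starRingEnd ℂ) w ^ k * dbar^[k - 1] f w) z = f z) ∧
    (∫ z in Ω,
        ‖-∑ k ∈ Finset.Icc 1 n,
            ((-1) ^ k / (k.factorial : ℂ)) * (starRingEnd ℂ) z ^ k * dbar^[k - 1] f z‖ ^ 2 /
          (1 + ‖z‖ ^ 2) ^ (2 * n) * Real.exp (-(p z))) ≤
      n * ∑ k ∈ Finset.Icc 1 n, ∫ z in Ω, ‖dbar^[k - 1] f z‖ ^ 2 * Real.exp (-(p z)) :=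
  stmt_8_general Ω hΩ p n f hreg hpoly hint
end

section
/- Fix w ∈ ℂ and n ≥ 1, and let f(z) = F_n(z,w). Then the function u_n(z) = e^{z·conj(w)} Σ_{s=1}^{n} (z̄^s/s!) (z−w)^{s−1} L^s_{n−s}(|z−w|²) solves the ∂̄-problem ∂̄u_n = f on ℂ. -/
/-- The polyanalytic Fock kernel of order `n`. -/
noncomputable def FockK (n : ℕ) (z w : ℂ) : ℂ :=
  Complex.exp (z * (starRingEnd ℂ) w) *
    ∑ k ∈ Finset.range n,
      ((-1) ^ k / (k.factorial : ℂ)) * (n.choose (k + 1)) * ((‖z - w‖ ^ (2 * k) : ℝ) : ℂ)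

/-- The generalized Laguerre polynomial `L^α_m(x) = Σ_{k=0}^m ((−x)^k/k!) C(m+α, m−k)`. -/
noncomputable def laguerre (α m : ℕ) (x : ℝ) : ℝ :=
  ∑ k ∈ Finset.range (m + 1), (-x) ^ k / (k.factorial : ℝ) * ((m + α).choose (m - k))

/-! The factor `exp (z * conj w)` is holomorphic, so only the sum has to be differentiated in
`z̄`. Put `ζ = z - w` and `X = |ζ|²`, so that `∂̄X = ζ`. Since `d/dX L^α_{m+1} = -L^{α+1}_m`, the
`∂̄`-derivative of the `s`-th summand is `B_{s-1} - B_s`, where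
`B_j = (z̄ ζ)^j / j! · L^{j+1}_{n-1-j}(X)` and `B_n = 0`. The sum telescopes to
`B_0 = L^1_{n-1}(|z - w|²)`, which is the polynomial factor of `F_n(z, w)`. -/

open Complex ComplexConjugate Finset Nat

/-- `u` is `ℝ`-differentiable at `z` with differential `v ↦ a v + b v̄` for some `a`, that is,
with `∂̄u(z) = b`. -/
def HasDbarAt (u : ℂ → ℂ) (b z : ℂ) : Prop :=
  ∃ a : ℂ, HasFDerivAt u (a • (1 : ℂ →L[ℝ] ℂ) + b • conjCLE.toContinuousLinearMap) z

namespace HasDbarAt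

variable {u v : ℂ → ℂ} {b c z : ℂ}

theorem dbar_eq (h : HasDbarAt u b z) : dbar u z = b := by
  obtain ⟨a, ha⟩ := h
  simp only [dbar, ha.fderiv, add_apply, smul_apply, one_apply_eq_self,
    ContinuousLinearEquiv.coe_coe, conjCLE_apply, map_one, conj_I, smul_eq_mul]
  linear_combination (a / 2 - b / 2) * I_sq

theorem of_differentiableAt (h : DifferentiableAt ℂ u z) : HasDbarAt u 0 z :=
  ⟨deriv u z, (h.hasDerivAt.hasFDerivAt.restrictScalars ℝ).congr_fderiv <| by
    ext v; simp [mul_comm]⟩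

theorem mul (hu : HasDbarAt u b z) (hv : HasDbarAt v c z) :
    HasDbarAt (fun z' => u z' * v z') (b * v z + u z * c) z := by
  obtain ⟨a, ha⟩ := hu
  obtain ⟨a', ha'⟩ := hv
  refine ⟨a * v z + u z * a', (ha.fun_mul ha').congr_fderiv ?_⟩
  ext v
  simp only [smul_add, add_apply, smul_apply, one_apply_eq_self, smul_eq_mul,
    ContinuousLinearEquiv.coe_coe, ContinuousAlgEquiv.coeCLE_apply, conjCAE_apply]
  ring

theorem sum {ι : Type*} {s : Finset ι} {u : ι → ℂ → ℂ} {b : ι → ℂ}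
    (h : ∀ i ∈ s, HasDbarAt (u i) (b i) z) :
    HasDbarAt (fun z' => ∑ i ∈ s, u i z') (∑ i ∈ s, b i) z := by
  choose! a ha using h
  exact ⟨∑ i ∈ s, a i, (HasFDerivAt.fun_sum ha).congr_fderiv <| by
    ext v; simp [sum_mul, sum_add_distrib]⟩

theorem comp {g : ℂ → ℂ} {g' : ℂ} (hg : HasDerivAt g g' (u z)) (hu : HasDbarAt u b z) :
    HasDbarAt (fun z' => g (u z')) (g' * b) z := by
  obtain ⟨a, ha⟩ := hu
  refine ⟨g' * a, ((hg.hasFDerivAt.restrictScalars ℝ).comp z ha).congr_fderiv ?_⟩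
  ext v
  simp only [ContinuousLinearMap.comp_add, add_apply, ContinuousLinearMap.comp_apply, smul_apply,
    one_apply_eq_self, smul_eq_mul, ContinuousLinearMap.coe_restrictScalars',
    ContinuousLinearMap.toSpanSingleton_apply, ContinuousLinearEquiv.coe_coe,
    ContinuousAlgEquiv.coeCLE_apply, conjCAE_apply]
  ring

end HasDbarAt

theorem hasDbarAt_conj (z : ℂ) : HasDbarAt (conj ·) 1 z :=
  ⟨0, conjCLE.hasFDerivAt.congr_fderiv <| by ext v; simp⟩

/-- `shiftedLaguerre n j = L^{j+1}_{n-1-j}` for `j < n`; it vanishes for `j ≥ n`. -/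
noncomputable def shiftedLaguerre (n j : ℕ) (x : ℂ) : ℂ :=
  ∑ k ∈ range (n - j), (-x) ^ k / (k ! : ℂ) * n.choose (n - j - 1 - k)

theorem hasDerivAt_neg_pow_div_factorial (k : ℕ) (x : ℂ) :
    HasDerivAt (fun x : ℂ => (-x) ^ (k + 1) / ((k + 1) ! : ℂ)) (-((-x) ^ k / (k ! : ℂ))) x := by
  refine (((hasDerivAt_neg x).pow (k + 1)).div_const _).congr_deriv ?_
  rw [Nat.factorial_succ]
  push_cast
  field_simp

theorem hasDerivAt_shiftedLaguerre (n j : ℕ) (x : ℂ) :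
    HasDerivAt (shiftedLaguerre n j) (-shiftedLaguerre n (j + 1) x) x := by
  obtain h | ⟨m, hm⟩ : n - j = 0 ∨ ∃ m, n - j = m + 1 := by cases n - j <;> simp
  · have h' : n - (j + 1) = 0 := by omega
    have hvanish : shiftedLaguerre n j = fun _ => 0 :=
      funext fun x => by simp [shiftedLaguerre, h]
    simpa [hvanish, shiftedLaguerre, h'] using hasDerivAt_const x (0 : ℂ)
  · have hm' : n - (j + 1) = m := by omega
    have hsplit : shiftedLaguerre n j = fun x => ∑ k ∈ range m,
        (-x) ^ (k + 1) / ((k + 1) ! : ℂ) * n.choose (n - (j + 1) - 1 - k) + n.choose m := by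
      funext x
      rw [shiftedLaguerre, hm, sum_range_succ']
      congr 1
      · exact sum_congr rfl fun k _ => by
          rw [show m + 1 - 1 - (k + 1) = n - (j + 1) - 1 - k by omega]
      · simp
    rw [hsplit]
    refine ((HasDerivAt.fun_sum fun k _ =>
      (hasDerivAt_neg_pow_div_factorial k x).mul_const _).add_const _).congr_deriv ?_
    simp [shiftedLaguerre, hm', neg_mul, sum_neg_distrib]

@[simp]
theorem shiftedLaguerre_self (n : ℕ) (x : ℂ) : shiftedLaguerre n n x = 0 := by
  simp [shiftedLaguerre]

theorem ofReal_laguerre {n j : ℕ} (hj : j < n) (x : ℝ) :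
    (laguerre (j + 1) (n - (j + 1)) x : ℂ) = shiftedLaguerre n j x := by
  rw [laguerre, shiftedLaguerre, show n - (j + 1) + 1 = n - j by omega,
    show n - (j + 1) + (j + 1) = n by omega]
  push_cast
  rfl

theorem FockK_eq (n : ℕ) (z w : ℂ) :
    FockK n z w = exp (z * conj w) * shiftedLaguerre n 0 (‖z - w‖ ^ 2 : ℝ) := by
  rw [FockK, shiftedLaguerre]
  congr 1
  refine sum_congr rfl fun k hk => ?_
  have hk' : k + 1 ≤ n := by have := mem_range.mp hk; omega
  rw [Nat.sub_zero, Nat.sub_sub, Nat.add_comm 1 k, Nat.choose_symm hk']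
  push_cast
  rw [neg_pow ((‖z - w‖ : ℂ) ^ 2)]
  ring

theorem hasDbarAt_ofReal_norm_sub_sq (w z : ℂ) :
    HasDbarAt (fun z' => ((‖z' - w‖ ^ 2 : ℝ) : ℂ)) (z - w) z := by
  have h := (HasDbarAt.of_differentiableAt (differentiableAt_id.sub_const w)).mul
    (HasDbarAt.comp ((hasDerivAt_id (conj z)).sub_const (conj w)) (hasDbarAt_conj z))
  simp only [id, mul_one, zero_mul, zero_add] at h
  convert h using 2 with z'
  rw [← map_sub, mul_conj']
  push_cast
  rfl

section FockPrimitive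

variable (n : ℕ) (w z : ℂ)

theorem hasDbarAt_laguerre_term {j : ℕ} (hj : j < n) :
    HasDbarAt (fun z' => conj z' ^ (j + 1) / ((j + 1) ! : ℂ) * (z' - w) ^ j *
        (laguerre (j + 1) (n - (j + 1)) (‖z' - w‖ ^ 2) : ℂ))
      ((conj z * (z - w)) ^ j / (j ! : ℂ) * shiftedLaguerre n j (‖z - w‖ ^ 2 : ℝ) -
        (conj z * (z - w)) ^ (j + 1) / ((j + 1) ! : ℂ) *
          shiftedLaguerre n (j + 1) (‖z - w‖ ^ 2 : ℝ)) z := by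
  have hconj := HasDbarAt.comp ((hasDerivAt_pow (j + 1) (conj z)).div_const ((j + 1) ! : ℂ))
    (hasDbarAt_conj z)
  have hhol : HasDbarAt (fun z' => (z' - w) ^ j) 0 z := .of_differentiableAt (by fun_prop)
  have hL := HasDbarAt.comp (hasDerivAt_shiftedLaguerre n j _) (hasDbarAt_ofReal_norm_sub_sq w z)
  simp_rw [ofReal_laguerre hj]
  convert (hconj.mul hhol).mul hL using 1
  rw [Nat.add_sub_cancel, mul_pow, mul_pow, Nat.factorial_succ]
  push_cast
  field_simp
  ring

theorem hasDbarAt_laguerre_sum :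
    HasDbarAt (fun z' => ∑ s ∈ Icc 1 n, conj z' ^ s / (s ! : ℂ) * (z' - w) ^ (s - 1) *
        (laguerre s (n - s) (‖z' - w‖ ^ 2) : ℂ))
      (shiftedLaguerre n 0 (‖z - w‖ ^ 2 : ℝ)) z := by
  have h := HasDbarAt.sum fun j (hj : j ∈ range n) =>
    hasDbarAt_laguerre_term n w z (mem_range.mp hj)
  rw [sum_range_sub' (fun j => (conj z * (z - w)) ^ j / (j ! : ℂ) *
    shiftedLaguerre n j (‖z - w‖ ^ 2 : ℝ))] at h
  convert h using 1
  · funext z'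
    rw [← Ico_add_one_right_eq_Icc, sum_Ico_eq_sum_range, add_tsub_cancel_right]
    simp [add_comm]
  · simp

end FockPrimitive

theorem stmt_18_general (w : ℂ) (n : ℕ) :
    ∀ z : ℂ,
      dbar (fun z' => Complex.exp (z' * (starRingEnd ℂ) w) *
        ∑ s ∈ Finset.Icc 1 n, (starRingEnd ℂ) z' ^ s / (s.factorial : ℂ) *
          (z' - w) ^ (s - 1) * ((laguerre s (n - s) (‖z' - w‖ ^ 2) : ℝ) : ℂ)) z =
      FockK n z w := by
  intro z
  have hexp : HasDbarAt (fun z' => exp (z' * conj w)) 0 z := .of_differentiableAt (by fun_prop)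
  rw [(hexp.mul (hasDbarAt_laguerre_sum n w z)).dbar_eq, FockK_eq]
  ring

theorem stmt_18 (w : ℂ) (n : ℕ) (hn : 1 ≤ n) :
    ∀ z : ℂ,
      dbar (fun z' => Complex.exp (z' * (starRingEnd ℂ) w) *
        ∑ s ∈ Finset.Icc 1 n, (starRingEnd ℂ) z' ^ s / (s.factorial : ℂ) *
          (z' - w) ^ (s - 1) * ((laguerre s (n - s) (‖z' - w‖ ^ 2) : ℝ) : ℂ)) z =
      FockK n z w :=
  stmt_18_general w n
end
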